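/- Re-projection recovers the reduced dynamics (general polynomial case): for f(x,u) = Σ_{i=1}^{ℓ} 𝖠_i (x^{⊗i}) + B u, where x^{⊗i} denotes the i-fold Kronecker power and 𝖠_i ∈ R^{N×N^i}, the re-projection iteration x̄_0 = Vᵀ x_0, x̄_{k+1} = Vᵀ f(V x̄_k, u_k) produces exactly the trajectory of the reduced model x̃_{k+1} = Σ_{i=1}^{ℓ} (Vᵀ𝖠_i V^{⊗i}) (x̃_k^{⊗i}) + (VᵀB) u_k with x̃_0 = Vᵀ x_0; i.e., x̄_k = x̃_k for all k ≥ 0. -/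
import Mathlib


open Matrix

/-- The `i`-fold Kronecker power of a matrix, realized on function index types. -/
noncomputable def kronPow {N n : ℕ} (M : Matrix (Fin N) (Fin n) ℝ) (i : ℕ) :
    Matrix (Fin i → Fin N) (Fin i → Fin n) ℝ :=
  Matrix.of fun f g => ∏ j, M (f j) (g j)

/-- The `i`-fold Kronecker power of a vector. -/
noncomputable def vecPow {N : ℕ} (x : Fin N → ℝ) (i : ℕ) : (Fin i → Fin N) → ℝ :=
  fun f => ∏ j, x (f j)

lemma kronPow_mulVec {N n : ℕ} (M : Matrix (Fin N) (Fin n) ℝ) (x : Fin n → ℝ) (i : ℕ) :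
    (kronPow M i).mulVec (vecPow x i) = vecPow (M.mulVec x) i := by
  funext f
  simp only [kronPow, vecPow, mulVec, dotProduct, Matrix.of_apply]
  simp_rw [← Finset.prod_mul_distrib]
  exact (Fintype.prod_sum fun j g => M (f j) g * x g).symm


theorem reprojection_recovers_reduced_polynomial (N n p ℓ : ℕ) (hℓ : 1 ≤ ℓ)
    (A : (i : ℕ) → Matrix (Fin N) (Fin i → Fin N) ℝ)
    (B : Matrix (Fin N) (Fin p) ℝ)
    (V : Matrix (Fin N) (Fin n) ℝ) (hV : Vᵀ * V = 1)
    (u : ℕ → Fin p → ℝ) (x0 : Fin N → ℝ)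
    (xbar xtil : ℕ → Fin n → ℝ)
    (hbar0 : xbar 0 = Vᵀ.mulVec x0)
    (hbar : ∀ k, xbar (k + 1) =
      Vᵀ.mulVec ((∑ i ∈ Finset.Icc 1 ℓ, (A i).mulVec (vecPow (V.mulVec (xbar k)) i)) +
        B.mulVec (u k)))
    (htil0 : xtil 0 = Vᵀ.mulVec x0)
    (htil : ∀ k, xtil (k + 1) =
      (∑ i ∈ Finset.Icc 1 ℓ, (Vᵀ * A i * kronPow V i).mulVec (vecPow (xtil k) i)) +
        (Vᵀ * B).mulVec (u k)) :
    ∀ k, xbar k = xtil k := by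
  intro k
  induction k with
  | zero => rw [hbar0, htil0]
  | succ k ih =>
    rw [hbar, htil, ih]
    rw [Matrix.mulVec_add, ← Matrix.mulVec_mulVec]
    congr 1
    simp only [← Matrix.mulVecLin_apply, map_sum]
    apply Finset.sum_congr rfl
    intro i _
    simp only [Matrix.mulVecLin_apply, ← Matrix.mulVec_mulVec, kronPow_mulVec]
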